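/- arXiv:math/0702436 — 4 statements merged into one kernel-verified Lean document; each statement's English description precedes it below -/
import Mathlib

section
/- Let R be a commutative ring and let h(x) = \sum_{i=-m}^{n} c_i x^i be a Laurent polynomial over R with m, n \geq 1 such that c_n and c_{-m} are units in R. Then the R-algebra homomorphism R[x] \to R[x, x^{-1}] sending x to h(x) is a finite ring homomorphism; that is, R[x, x^{-1}] is a finitely generated module over R[x] via this map. -/
open LaurentPolynomial Polynomial

/-!
Multiplying `h = ∑_{i=-m}^{n} c_i T^i` by `T^m` gives `T^m h = c_n T^{m+n} + q(T)` with `q` a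
polynomial of degree `< m + n`. As `c_n` is a unit and `m < m + n`, `T` is a root of a monic
polynomial with coefficients in `R[h]`. The involution `T ↦ T⁻¹` exchanges the roles of `c_n` and
`c_{-m}`, so `T⁻¹` is integral over `R[h]` as well. Since `T` and `T⁻¹` generate `R[T, T⁻¹]`, it is
integral and of finite type, hence finite, over `R[h]`.
-/

theorem Polynomial.isIntegralElem_aeval_of_pow_mul_eq {R A : Type*} [CommRing R] [CommRing A]
    [Algebra R A] {h t : A} {k d : ℕ} (hkd : k < d) (u : Rˣ) (p : R[X]) (hp : p.degree < d)
    (heq : t ^ k * h = (u : R) • t ^ d + aeval t p) :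
    ((aeval h : R[X] →ₐ[R] A) : R[X] →+* A).IsIntegralElem t := by
  set r : R[X][X] := p.map C - C X * X ^ k
  have hr : r.degree < d := by
    refine (degree_sub_le _ _).trans_lt (max_lt ?_ ?_)
    · rwa [degree_map_eq_of_injective C_injective]
    · exact (degree_C_mul_X_pow_le _ _).trans_lt (by exact_mod_cast hkd)
  refine ⟨X ^ d + C (C ((u⁻¹ : Rˣ) : R)) * r, monic_X_pow_add ?_, ?_⟩
  · rw [← smul_eq_C_mul]
    exact (degree_smul_le _ _).trans_lt hr
  have hcomp : ((aeval h : R[X] →ₐ[R] A) : R[X] →+* A).comp C = algebraMap R A :=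
    (aeval h).comp_algebraMap
  simp only [r, eval₂_add, eval₂_mul, eval₂_sub, eval₂_X_pow, eval₂_C, eval₂_map, hcomp,
    RingHom.coe_coe, aeval_C, aeval_X, ← aeval_def]
  rw [mul_comm h, heq, ← Algebra.smul_def, sub_add_cancel_right, smul_neg, smul_smul,
    ← Units.val_mul, inv_mul_cancel, Units.val_one, one_smul, add_neg_cancel]

namespace LaurentPolynomial
variable {R : Type*} [CommRing R]

theorem isIntegralElem_T_one_of_isUnit_coeff {m n : ℕ} (hn : 1 ≤ n) {c : ℤ → R}
    (hcn : IsUnit (c n)) :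
    ((aeval (∑ i ∈ Finset.Icc (-(m : ℤ)) n, C (c i) * T i) : R[X] →ₐ[R] R[T;T⁻¹]) :
      R[X] →+* R[T;T⁻¹]).IsIntegralElem (T 1) := by
  refine isIntegralElem_aeval_of_pow_mul_eq (k := m) (d := m + n) (by omega) hcn.unit
    (∑ i ∈ Finset.Ico (-(m : ℤ)) n, Polynomial.C (c i) * X ^ (i + m).toNat) ?_ ?_
  · refine (degree_sum_le _ _).trans_lt <| (Finset.sup_lt_iff (WithBot.bot_lt_coe _)).2 ?_
    intro i hi
    have := (Finset.mem_Ico.1 hi).2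
    have hdeg : (i + m).toNat < m + n := by omega
    exact (degree_C_mul_X_pow_le _ _).trans_lt (by exact_mod_cast hdeg)
  · have hshift : ∀ i ∈ Finset.Icc (-(m : ℤ)) n,
        T 1 ^ m * (C (c i) * T i) = C (c i) * (T 1 : R[T;T⁻¹]) ^ (i + m).toNat := by
      intro i hi
      have := (Finset.mem_Icc.1 hi).1
      rw [T_pow, T_pow, mul_left_comm, ← T_add]
      congr 2
      omega
    rw [Finset.mul_sum, Finset.sum_congr rfl hshift, ← Finset.Ico_insert_right (by omega),
      Finset.sum_insert Finset.right_notMem_Ico, map_sum, IsUnit.unit_spec, smul_eq_C_mul]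
    congr 1
    · rw [T_pow, T_pow]
      congr 2
      omega
    · refine Finset.sum_congr rfl fun i _ => ?_
      rw [map_mul, aeval_C, map_pow, aeval_X, C_eq_algebraMap]

theorem invert_sum_C_mul_T_Icc (a b : ℤ) (c : ℤ → R) :
    invert (∑ i ∈ Finset.Icc a b, C (c i) * T i) =
      ∑ i ∈ Finset.Icc (-b) (-a), C (c (-i)) * T i := by
  rw [map_sum]
  refine Finset.sum_nbij' Neg.neg Neg.neg ?_ ?_ (fun i _ ↦ neg_neg i) (fun i _ ↦ neg_neg i) ?_
  · intro i hi; simp only [Finset.mem_Icc] at hi ⊢; omega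
  · intro i hi; simp only [Finset.mem_Icc] at hi ⊢; omega
  · intro i _; rw [map_mul, invert_C, invert_T, neg_neg]

theorem isIntegralElem_T_neg_one_of_isUnit_coeff {m n : ℕ} (hm : 1 ≤ m) {c : ℤ → R}
    (hcm : IsUnit (c (-m))) :
    ((aeval (∑ i ∈ Finset.Icc (-(m : ℤ)) n, C (c i) * T i) : R[X] →ₐ[R] R[T;T⁻¹]) :
      R[X] →+* R[T;T⁻¹]).IsIntegralElem (T (-1)) := by
  set h := ∑ i ∈ Finset.Icc (-(m : ℤ)) n, C (c i) * T i
  have hinv : invert h = ∑ i ∈ Finset.Icc (-(n : ℤ)) m, C (c (-i)) * T i := by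
    rw [invert_sum_C_mul_T_Icc, neg_neg]
  have hcomp : invert.toAlgHom.comp (aeval (invert h)) = aeval h := by
    rw [← aeval_algHom]
    exact congrArg aeval (involutive_invert h)
  have := (isIntegralElem_T_one_of_isUnit_coeff (m := n) hm (c := fun i ↦ c (-i)) hcm).map
    ((invert.toAlgHom : R[T;T⁻¹] →ₐ[R] R[T;T⁻¹]) : R[T;T⁻¹] →+* R[T;T⁻¹])
  rw [← hinv, ← AlgHom.comp_toRingHom, hcomp] at this
  simpa only [AlgEquiv.toAlgHom_toRingHom, RingHom.coe_coe, invert_T] using this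

theorem T_mem_closure_T_one_T_neg_one (k : ℤ) :
    (T k : R[T;T⁻¹]) ∈ Subring.closure {T 1, T (-1)} := by
  have h₁ : (T 1 : R[T;T⁻¹]) ∈ Subring.closure {T 1, T (-1)} := Subring.subset_closure (by simp)
  have h₂ : (T (-1) : R[T;T⁻¹]) ∈ Subring.closure {T 1, T (-1)} := Subring.subset_closure (by simp)
  obtain ⟨j, rfl | rfl⟩ := k.eq_nat_or_neg
  · simpa only [T_pow, mul_one] using pow_mem h₁ j
  · simpa only [T_pow, mul_neg_one] using pow_mem h₂ j

theorem finite_aeval_of_isIntegralElem_T {h : R[T;T⁻¹]}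
    (h₁ : ((aeval h : R[X] →ₐ[R] R[T;T⁻¹]) : R[X] →+* R[T;T⁻¹]).IsIntegralElem (T 1))
    (h₂ : ((aeval h : R[X] →ₐ[R] R[T;T⁻¹]) : R[X] →+* R[T;T⁻¹]).IsIntegralElem (T (-1))) :
    ((aeval h : R[X] →ₐ[R] R[T;T⁻¹]) : R[X] →+* R[T;T⁻¹]).Finite := by
  set f : R[X] →+* R[T;T⁻¹] := ((aeval h : R[X] →ₐ[R] R[T;T⁻¹]) : R[X] →+* R[T;T⁻¹])
  refine RingHom.finite_iff_isIntegral_and_finiteType.2 ⟨fun x ↦ ?_, ?_⟩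
  · induction x using LaurentPolynomial.induction_on' with
    | add p q hp hq => exact hp.add f hq
    | C_mul_T k a =>
      have hC : f.IsIntegralElem (C a) := by
        simpa only [f, RingHom.coe_coe, aeval_C, ← C_eq_algebraMap] using
          f.isIntegralElem_map (x := Polynomial.C a)
      exact hC.mul f (h₁.of_mem_closure f h₂ (T_mem_closure_T_one_T_neg_one k))
  · have hcomp : f.comp Polynomial.C = algebraMap R R[T;T⁻¹] := (aeval h).comp_algebraMap
    exact .of_comp_finiteType (hcomp ▸ RingHom.finiteType_algebraMap.2 inferInstance)

end LaurentPolynomial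

/-- Lemma 1.1(i) (finiteness part): if `h(x) = ∑_{i=-m}^{n} c_i x^i` is a Laurent polynomial
over a commutative ring `R` with `m, n ≥ 1` and `c_n`, `c_{-m}` units in `R`, then the
`R`-algebra homomorphism `R[x] → R[x, x⁻¹]`, `x ↦ h(x)`, is a finite ring homomorphism. -/
theorem laurent_finite_of_unit_extreme_coeffs
    {R : Type*} [CommRing R] (m n : ℕ) (hm : 1 ≤ m) (hn : 1 ≤ n)
    (c : ℤ → R) (hcn : IsUnit (c n)) (hcm : IsUnit (c (-(m : ℤ))))
    (h : LaurentPolynomial R)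
    (hh : h = ∑ i ∈ Finset.Icc (-(m : ℤ)) (n : ℤ), LaurentPolynomial.C (c i) * T i) :
    ((Polynomial.aeval h : Polynomial R →ₐ[R] LaurentPolynomial R) :
        Polynomial R →+* LaurentPolynomial R).Finite := by
  subst hh
  exact finite_aeval_of_isIntegralElem_T (isIntegralElem_T_one_of_isUnit_coeff hn hcn)
    (isIntegralElem_T_neg_one_of_isUnit_coeff hm hcm)
end

section
/- Let k be an algebraically closed field of characteristic p > 0, let r, d, s be positive integers with r and d coprime to p and 1 \leq s < p, and let \alpha = \sum_{i=-s}^{\infty} a_i t^i \in k((t)) with a_{-s} \neq 0. Suppose that every d-th root of unity \mu in k satisfies \alpha(\mu t) - \alpha(t) = \gamma^p - \gamma for some \gamma \in k((t)) (i.e., \mu_d(k) \subseteq G(\alpha(t), r), with d dividing r assumed via this containment of root-of-unity groups). Then d divides r, d divides s, and a_i = 0 for every i with -s \leq i \leq -1 and d not dividing i. -/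
/-- For `α = ∑ᵢ aᵢ tⁱ ∈ k((t))` and `μ ∈ k`, the Laurent series
`α(μt) = ∑ᵢ μⁱ aᵢ tⁱ`. -/
noncomputable def LaurentSeries.scaleVar {k : Type*} [Field k] (μ : k) (α : LaurentSeries k) :
    LaurentSeries k where
  coeff i := μ ^ i * α.coeff i
  isPWO_support' := α.isPWO_support'.mono (by
    intro i hi
    simp only [Function.mem_support, ne_eq] at hi ⊢
    intro h
    exact hi (by rw [h, mul_zero]))

/-- The set `G(α(t), r)` of `r`-th roots of unity `μ` such that
`α(μt) - α(t) = γ^p - γ` for some Laurent series `γ`. -/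
def LaurentSeries.asGroup {k : Type*} [Field k] (p : ℕ) (α : LaurentSeries k) (r : ℕ) :
    Set k :=
  {μ | μ ^ r = 1 ∧ ∃ γ : LaurentSeries k, LaurentSeries.scaleVar μ α - α = γ ^ p - γ}

/-!
If `γ` has a pole of order `m ≥ 1`, then `γ ^ p - γ` has a pole of order `p * m ≥ p`. Hence when
`α` has a pole of order `s < p`, an equation `α(μt) - α(t) = γ ^ p - γ` forces `γ` to be regular,
so the polar part of `α(μt) - α(t)`, i.e. `∑_{i < 0} (μ ^ i - 1) aᵢ tⁱ`, vanishes. Applied to a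
primitive `d`-th root of unity `ζ` (which exists since `p ∤ d`), this kills every `aᵢ` with
`i < 0` and `d ∤ i`; in particular `d ∣ s` because `a₋ₛ ≠ 0`, and `d ∣ r` because `ζ ^ r = 1`.
-/

namespace LaurentSeries

section PowSubSelf

variable {R : Type*} [Ring R] [NoZeroDivisors R] {p n : ℕ} {γ : LaurentSeries R}

theorem order_nonneg_of_coeff_pow_sub_self_eq_zero (hp : 1 < p) (hnp : n < p)
    (h : ∀ j : ℤ, j < -(n : ℤ) → (γ ^ p - γ).coeff j = 0) : 0 ≤ γ.order := by
  by_contra! hneg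
  have hγ : γ ≠ 0 := by rintro rfl; simp at hneg
  have hord : (γ ^ p).order = p * γ.order := by simp
  have hlt : (γ ^ p).order < γ.order := by rw [hord]; nlinarith
  have hpole : (γ ^ p).order < -(n : ℤ) := by rw [hord]; nlinarith
  have hlead : (γ ^ p - γ).coeff (γ ^ p).order ≠ 0 := by
    rw [HahnSeries.coeff_sub, HahnSeries.coeff_eq_zero_of_lt_order hlt, sub_zero]
    exact HahnSeries.coeff_order_eq_zero.not.mpr (pow_ne_zero p hγ)
  exact hlead (h _ hpole)

theorem coeff_pow_sub_self_eq_zero_of_order_nonneg (hγ : 0 ≤ γ.order) {i : ℤ} (hi : i < 0) :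
    (γ ^ p - γ).coeff i = 0 := by
  have hpow : i < (γ ^ p).order := by simp only [HahnSeries.order_pow, nsmul_eq_mul]; nlinarith
  rw [HahnSeries.coeff_sub, HahnSeries.coeff_eq_zero_of_lt_order hpow,
    HahnSeries.coeff_eq_zero_of_lt_order (hi.trans_le hγ), sub_zero]

end PowSubSelf

theorem coeff_scaleVar {k : Type*} [Field k] (μ : k) (α : LaurentSeries k) (i : ℤ) :
    (scaleVar μ α).coeff i = μ ^ i * α.coeff i :=
  rfl

theorem coeff_eq_zero_of_scaleVar_sub_eq_pow_sub_self {k : Type*} [Field k] {p s : ℕ}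
    (hp : 1 < p) (hsp : s < p) {α γ : LaurentSeries k} {μ : k}
    (hbelow : ∀ i : ℤ, i < -(s : ℤ) → α.coeff i = 0) (hγ : scaleVar μ α - α = γ ^ p - γ)
    {i : ℤ} (hi : i < 0) (hμi : μ ^ i ≠ 1) : α.coeff i = 0 := by
  have hcoeff : ∀ j, (γ ^ p - γ).coeff j = (μ ^ j - 1) * α.coeff j := fun j => by
    rw [← hγ, HahnSeries.coeff_sub, coeff_scaleVar]; ring
  have hreg : 0 ≤ γ.order := order_nonneg_of_coeff_pow_sub_self_eq_zero hp hsp fun j hj => by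
    rw [hcoeff, hbelow j hj, mul_zero]
  have h := coeff_pow_sub_self_eq_zero_of_order_nonneg (p := p) hreg hi
  rw [hcoeff] at h
  exact (mul_eq_zero.mp h).resolve_left (sub_ne_zero.mpr hμi)

end LaurentSeries

theorem dvd_and_coeff_eq_zero_of_rootsOfUnity_subset_general
    {k : Type*} [Field k] [IsAlgClosed k] (p : ℕ) (hp : p.Prime) [CharP k p]
    (r d s : ℕ) (hsp : s < p)
    (hdp : Nat.Coprime d p)
    (α : LaurentSeries k)
    (hcoeff : α.coeff (-(s : ℤ)) ≠ 0)
    (hbelow : ∀ i : ℤ, i < -(s : ℤ) → α.coeff i = 0)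
    (hsub : ∀ μ : k, μ ^ d = 1 → μ ∈ LaurentSeries.asGroup p α r) :
    d ∣ r ∧ d ∣ s ∧
      ∀ i : ℤ, -(s : ℤ) ≤ i → i ≤ -1 → ¬ ((d : ℤ) ∣ i) → α.coeff i = 0 := by
  have : NeZero (d : k) :=
    ⟨fun h => (hp.coprime_iff_not_dvd.mp hdp.symm) ((CharP.cast_eq_zero_iff k p d).mp h)⟩
  obtain ⟨ζ, hζ⟩ := HasEnoughRootsOfUnity.exists_primitiveRoot k d
  obtain ⟨hζr, γ, hγ⟩ := hsub ζ hζ.pow_eq_one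
  have hvanish : ∀ i : ℤ, i < 0 → ¬ (d : ℤ) ∣ i → α.coeff i = 0 := fun i hi hdi =>
    LaurentSeries.coeff_eq_zero_of_scaleVar_sub_eq_pow_sub_self hp.one_lt hsp hbelow hγ hi
      (mt (hζ.zpow_eq_one_iff_dvd i).mp hdi)
  refine ⟨(hζ.pow_eq_one_iff_dvd r).mp hζr, ?_, fun i _ hi hdi => hvanish i (by omega) hdi⟩
  by_contra hds
  have hs : s ≠ 0 := by rintro rfl; exact hds (dvd_zero d)
  exact hcoeff (hvanish _ (by omega) (by rwa [dvd_neg, Int.natCast_dvd_natCast]))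

/-- Lemma 2.10(i): let `k` be algebraically closed of characteristic `p > 0`, let
`r, d, s ≥ 1` with `r, d` coprime to `p` and `s < p`, and let
`α = ∑_{i ≥ -s} aᵢ tⁱ ∈ k((t))` with `a₋ₛ ≠ 0`. If `μ_d(k) ⊆ G(α(t), r)`, then `d ∣ r`,
`d ∣ s`, and `aᵢ = 0` for every `i` with `-s ≤ i ≤ -1` not divisible by `d`. -/
theorem dvd_and_coeff_eq_zero_of_rootsOfUnity_subset
    {k : Type*} [Field k] [IsAlgClosed k] (p : ℕ) (hp : p.Prime) [CharP k p]
    (r d s : ℕ) (hr : 0 < r) (hd : 0 < d) (hs : 1 ≤ s) (hsp : s < p)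
    (hrp : Nat.Coprime r p) (hdp : Nat.Coprime d p)
    (α : LaurentSeries k)
    (hcoeff : α.coeff (-(s : ℤ)) ≠ 0)
    (hbelow : ∀ i : ℤ, i < -(s : ℤ) → α.coeff i = 0)
    (hsub : ∀ μ : k, μ ^ d = 1 → μ ∈ LaurentSeries.asGroup p α r) :
    d ∣ r ∧ d ∣ s ∧
      ∀ i : ℤ, -(s : ℤ) ≤ i → i ≤ -1 → ¬ ((d : ℤ) ∣ i) → α.coeff i = 0 :=
  dvd_and_coeff_eq_zero_of_rootsOfUnity_subset_general p hp r d s hsp hdp α hcoeff hbelow hsub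
end

section
/- Let V be a finite-dimensional irreducible representation of J over F such that the image of P in GL(V) is finite. Then there exists a one-dimensional representation L of J over F with P contained in the kernel of L such that the representation V \otimes L^{-1} has finite image in GL(V). -/
open TensorProduct

section Defs

variable {F : Type*} [Field F] {G : Type*} [Group G]

/-- A subspace `p` is invariant under the representation `ρ`. -/
def IsInvariantSubspace {V : Type*} [AddCommGroup V] [Module F V]
    (ρ : Representation F G V) (p : Submodule F V) : Prop :=
  ∀ (x : G), ∀ v ∈ p, ρ x v ∈ p

/-- The restriction of a representation to an invariant subspace. -/
def Representation.restrictSubspace {V : Type*} [AddCommGroup V] [Module F V]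
    (ρ : Representation F G V) (p : Submodule F V) (hp : IsInvariantSubspace ρ p) :
    Representation F G p where
  toFun x := (ρ x).restrict (hp x)
  map_one' := by
    refine LinearMap.ext fun v => Subtype.ext ?_
    simp [LinearMap.restrict_apply]
  map_mul' x y := by
    refine LinearMap.ext fun v => Subtype.ext ?_
    simp [LinearMap.restrict_apply]

/-- Two representations are isomorphic if there is an equivariant linear equivalence. -/
def RepIso {V V' : Type*} [AddCommGroup V] [Module F V] [AddCommGroup V'] [Module F V']
    (ρ : Representation F G V) (ρ' : Representation F G V') : Prop :=
  ∃ e : V ≃ₗ[F] V', ∀ (x : G) (v : V), e (ρ x v) = ρ' x (e v)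

/-- A representation is irreducible if it is nonzero and its only invariant subspaces
are `⊥` and `⊤`. -/
def IsIrreducibleRep {V : Type*} [AddCommGroup V] [Module F V]
    (ρ : Representation F G V) : Prop :=
  Nontrivial V ∧ ∀ p : Submodule F V, IsInvariantSubspace ρ p → p = ⊥ ∨ p = ⊤

/-- A representation is indecomposable if it is nonzero and is not the direct sum of two
proper (nonzero) invariant subspaces. -/
def IsIndecomposableRep {V : Type*} [AddCommGroup V] [Module F V]
    (ρ : Representation F G V) : Prop :=
  Nontrivial V ∧ ∀ p q : Submodule F V, IsInvariantSubspace ρ p → IsInvariantSubspace ρ q →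
    IsCompl p q → p = ⊥ ∨ q = ⊥

end Defs

/-- The `n × n` unipotent upper-triangular matrix with `1`'s on the diagonal and on the
superdiagonal: a single Jordan block with eigenvalue `1`. -/
def jordanMatrix (F : Type*) [Field F] (n : ℕ) : Matrix (Fin n) (Fin n) F :=
  Matrix.of fun i j => if (j : ℕ) = (i : ℕ) ∨ (j : ℕ) = (i : ℕ) + 1 then 1 else 0

/-- `U` is the representation `U(n)` of `J`: the group `P` acts trivially and `g` acts by
the unipotent `n × n` Jordan block. -/
def IsUnipotentJordanRep {F : Type*} [Field F] {J : Type*} [Group J]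
    (P : Subgroup J) (g : J) (n : ℕ) (U : Representation F J (Fin n → F)) : Prop :=
  (∀ σ ∈ P, U σ = 1) ∧ U g = Matrix.toLin' (jordanMatrix F n)


/-!
Conjugation by `ρ g` permutes the finite group `ρ(P)`, so some power `ρ(g ^ N)` centralises
`ρ(P)`; it also commutes with `ρ g`, hence with all of `ρ(J)`, and by Schur's lemma it is a
scalar `c`. Since `J ⧸ P` is infinite cyclic on `g`, there is a character `χ` trivial on `P`
with `χ g` an `N`-th root of `c`. The twist `ψ x = χ(x)⁻¹ ρ(x)` agrees with `ρ` on `P` and kills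
`g ^ N`, so its image lies in the finite set `⟨ψ g⟩ · ρ(P)`.
-/

section CyclicQuotient

variable {J : Type*} [Group J] (P : Subgroup J) {g : J}

theorem zpowers_mk_eq_top [P.Normal] (hgen : Subgroup.closure ((P : Set J) ∪ {g}) = ⊤) :
    Subgroup.zpowers (g : J ⧸ P) = ⊤ := by
  rw [eq_top_iff, ← Subgroup.map_top_of_surjective _ (QuotientGroup.mk'_surjective P), ← hgen,
    MonoidHom.map_closure, Subgroup.closure_le]
  rintro _ ⟨y, hy | rfl, rfl⟩
  · simp [(QuotientGroup.eq_one_iff y).mpr hy]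
  · exact Subgroup.mem_zpowers _

theorem exists_zpow_inv_mul_mem [P.Normal] (hgen : Subgroup.closure ((P : Set J) ∪ {g}) = ⊤)
    (x : J) : ∃ m : ℤ, (g ^ m)⁻¹ * x ∈ P := by
  obtain ⟨m, hm⟩ := Subgroup.mem_zpowers_iff.mp
    (zpowers_mk_eq_top P hgen ▸ Subgroup.mem_top (x : J ⧸ P))
  exact ⟨m, QuotientGroup.eq.mp (by simpa using hm)⟩

theorem exists_monoidHom_trivial_on_apply_eq [P.Normal]
    (hgen : Subgroup.closure ((P : Set J) ∪ {g}) = ⊤) (hfree : ∀ m : ℤ, g ^ m ∈ P → m = 0)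
    {A : Type*} [Group A] (a : A) :
    ∃ χ : J →* A, (∀ σ ∈ P, χ σ = 1) ∧ χ g = a := by
  have htop := zpowers_mk_eq_top P hgen
  have hinf : ¬IsOfFinOrder (g : J ⧸ P) := by
    rw [isOfFinOrder_iff_pow_eq_one]
    rintro ⟨n, hn, hgn⟩
    have := hfree n (by simpa [← QuotientGroup.eq_one_iff] using hgn)
    omega
  have : Infinite (J ⧸ P) := by
    rw [← Set.infinite_univ_iff, ← Subgroup.coe_top, ← htop]
    exact infinite_zpowers.mpr hinf
  let e := (intEquivOfZPowersEqTop _ htop).symm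
  refine ⟨(zpowersHom A a).comp (e.toMonoidHom.comp (QuotientGroup.mk' P)), fun σ hσ => ?_, ?_⟩
  · simp [(QuotientGroup.eq_one_iff σ).mpr hσ]
  · simp [e]

variable {M : Type*} [Group M]

theorem exists_pow_mem_centralizer_map [P.Normal] (ψ : J →* M)
    (hP : (Set.range fun σ : P => ψ σ).Finite) (g : J) :
    ∃ N, 0 < N ∧ ψ (g ^ N) ∈ Subgroup.centralizer (P.map ψ : Set M) := by
  let K := P.map ψ
  have : Finite K := by
    refine (hP.subset ?_).to_subtype
    rintro _ ⟨σ, hσ, rfl⟩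
    exact ⟨⟨σ, hσ⟩, rfl⟩
  have hg : ψ g ∈ Subgroup.normalizer (K : Set M) :=
    Subgroup.le_normalizer_map ψ
      (Subgroup.mem_map_of_mem ψ (Subgroup.normalizer_eq_top (H := P) ▸ Subgroup.mem_top g))
  -- `Aut K` is finite, and the kernel of `N(K) → Aut K` is the centraliser of `K`.
  obtain ⟨N, hN, hpow⟩ := isOfFinOrder_iff_pow_eq_one.mp
    (isOfFinOrder_of_finite (K.normalizerMonoidHom ⟨ψ g, hg⟩))
  rw [← map_pow, ← MonoidHom.mem_ker, Subgroup.normalizerMonoidHom_ker,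
    Subgroup.mem_subgroupOf] at hpow
  exact ⟨N, hN, by rw [map_pow]; exact hpow⟩

theorem commute_map_of_closure_eq_top (hgen : Subgroup.closure ((P : Set J) ∪ {g}) = ⊤)
    (ψ : J →* M) {z : M} (hP : ∀ σ ∈ P, Commute z (ψ σ)) (hg : Commute z (ψ g)) (x : J) :
    Commute z (ψ x) := by
  have hle : Subgroup.closure ((P : Set J) ∪ {g}) ≤ (Subgroup.centralizer {z}).comap ψ := by
    rw [Subgroup.closure_le]
    rintro y (hy | hy)
    · exact Subgroup.mem_centralizer_singleton_iff.mpr (hP y hy).symm.eq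
    · exact Subgroup.mem_centralizer_singleton_iff.mpr (Set.mem_singleton_iff.mp hy ▸ hg).symm.eq
  exact (Subgroup.mem_centralizer_singleton_iff.mp (hle (hgen ▸ Subgroup.mem_top x))).symm

theorem exists_pow_commute_of_finite [P.Normal]
    (hgen : Subgroup.closure ((P : Set J) ∪ {g}) = ⊤) (ψ : J →* M)
    (hP : (Set.range fun σ : P => ψ σ).Finite) :
    ∃ N, 0 < N ∧ ∀ x, Commute (ψ (g ^ N)) (ψ x) := by
  obtain ⟨N, hN, hcent⟩ := exists_pow_mem_centralizer_map P ψ hP g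
  refine ⟨N, hN, commute_map_of_closure_eq_top P hgen ψ (fun σ hσ => ?_) ?_⟩
  · exact (Subgroup.mem_centralizer_iff.mp hcent _ (Subgroup.mem_map_of_mem ψ hσ)).symm
  · rw [map_pow]
    exact (Commute.refl (ψ g)).pow_left N

theorem finite_range_of_isOfFinOrder [P.Normal]
    (hgen : Subgroup.closure ((P : Set J) ∪ {g}) = ⊤) (ψ : J →* M)
    (hP : (Set.range fun σ : P => ψ σ).Finite) (hg : IsOfFinOrder (ψ g)) :
    (Set.range ψ).Finite := by
  refine ((finite_zpowers.mpr hg).mul hP).subset ?_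
  rintro _ ⟨x, rfl⟩
  obtain ⟨m, hm⟩ := exists_zpow_inv_mul_mem P hgen x
  refine ⟨ψ g ^ m, ⟨m, rfl⟩, ψ ((g ^ m)⁻¹ * x), ⟨⟨_, hm⟩, rfl⟩, ?_⟩
  simp [← map_zpow]

end CyclicQuotient

theorem MonoidHom.finite_range_toHomUnits_comp_iff {G ι M : Type*} [Group G] [Monoid M]
    (ψ : G →* M) (f : ι → G) :
    (Set.range fun i => ψ.toHomUnits (f i)).Finite ↔ (Set.range fun i => ψ (f i)).Finite := by
  rw [← Set.finite_image_iff Units.val_injective.injOn, ← Set.range_comp]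
  rfl

theorem IsIrreducibleRep.exists_eq_smul_one {F G V : Type*} [Field F] [IsAlgClosed F] [Group G]
    [AddCommGroup V] [Module F V] [FiniteDimensional F V] {ρ : Representation F G V}
    (hρ : IsIrreducibleRep ρ) (f : Module.End F V) (hf : ∀ x, Commute f (ρ x)) :
    ∃ c : F, f = c • 1 := by
  have := hρ.1
  obtain ⟨c, hc⟩ := f.exists_eigenvalue
  have hinv : IsInvariantSubspace ρ (f.eigenspace c) := fun x v hv => by
    rw [Module.End.mem_eigenspace_iff] at hv ⊢
    rw [← Module.End.mul_apply, (hf x).eq, Module.End.mul_apply, hv, map_smul]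
  have htop := (hρ.2 _ hinv).resolve_left (Module.End.hasEigenvalue_iff.mp hc)
  refine ⟨c, LinearMap.ext fun v => ?_⟩
  simpa using Module.End.mem_eigenspace_iff.mp (htop ▸ Submodule.mem_top : v ∈ f.eigenspace c)

section Twist

variable {F G V : Type*} [Field F] [Monoid G] [AddCommGroup V] [Module F V]

def Representation.twist (ρ : Representation F G V) (χ : G →* Fˣ) : Representation F G V where
  toFun x := (↑(χ x)⁻¹ : F) • ρ x
  map_one' := by simp
  map_mul' x y := by
    rw [map_mul, map_mul, mul_inv, Units.val_mul, smul_mul_smul_comm]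

theorem Representation.twist_apply (ρ : Representation F G V) (χ : G →* Fˣ) (x : G) :
    ρ.twist χ x = (↑(χ x)⁻¹ : F) • ρ x :=
  rfl

end Twist

theorem exists_character_twist_finite_image_general
    {F : Type*} [Field F] [IsAlgClosed F]
    {J : Type*} [Group J] (P : Subgroup J) [P.Normal] (g : J)
    (hgen : Subgroup.closure ((P : Set J) ∪ {g}) = ⊤)
    (hfree : ∀ m : ℤ, g ^ m ∈ P → m = 0)
    {V : Type*} [AddCommGroup V] [Module F V] [FiniteDimensional F V]
    (ρ : Representation F J V)
    (hirr : IsIrreducibleRep ρ)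
    (hPfin : (Set.range fun x : P => ρ (x : J)).Finite) :
    ∃ χ : J →* Fˣ, (∀ σ ∈ P, χ σ = 1) ∧
      (Set.range fun x : J => ((↑(χ x)⁻¹ : F) • ρ x : V →ₗ[F] V)).Finite := by
  have : Nontrivial V := hirr.1
  obtain ⟨N, hN, hcomm⟩ := exists_pow_commute_of_finite P hgen ρ.toHomUnits
    ((ρ.finite_range_toHomUnits_comp_iff Subtype.val).mpr hPfin)
  obtain ⟨c, hc⟩ := hirr.exists_eq_smul_one (ρ (g ^ N)) fun x => (hcomm x).units_val
  have hc0 : c ≠ 0 := by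
    rintro rfl
    exact (ρ.toHomUnits (g ^ N)).ne_zero (by simpa using hc)
  obtain ⟨μ, hμ⟩ := IsAlgClosed.exists_pow_nat_eq c hN
  have hμ0 : μ ≠ 0 := by
    rintro rfl
    exact hc0 (by simpa [hN.ne'] using hμ.symm)
  obtain ⟨χ, hχP, hχg⟩ := exists_monoidHom_trivial_on_apply_eq P hgen hfree (Units.mk0 μ hμ0)
  refine ⟨χ, hχP, ?_⟩
  let ψ := ρ.twist χ
  have hψP : (fun σ : P => ψ σ) = fun σ : P => ρ σ := by
    funext σ
    simp [ψ, Representation.twist_apply, hχP σ σ.2]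
  have hψg : ψ g ^ N = 1 := by
    rw [← map_pow, Representation.twist_apply, hc, smul_smul, map_pow, hχg]
    simp [← hμ, hμ0]
  refine (ψ.finite_range_toHomUnits_comp_iff id).mp
    (finite_range_of_isOfFinOrder P hgen ψ.toHomUnits ?_ ?_)
  · rwa [ψ.finite_range_toHomUnits_comp_iff, hψP]
  · exact Units.isOfFinOrder_val.mp (isOfFinOrder_iff_pow_eq_one.mpr ⟨N, hN, hψg⟩)

/-- Lemma 2.2(ii): let `F` be an algebraically closed field of characteristic `0`, `J` a
group, `P` a normal subgroup, and `g ∈ J` such that `J` is generated by `P` and `g` and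
`J/P` is infinite cyclic generated by the image of `g`. If `V` is a finite-dimensional
irreducible representation of `J` over `F` on which `P` has finite image, then there is a
one-dimensional representation (character) `χ` of `J`, trivial on `P`, such that the
twisted representation `V ⊗ χ⁻¹`, i.e. `x ↦ χ(x)⁻¹ • ρ(x)`, has finite image. -/
theorem exists_character_twist_finite_image
    {F : Type*} [Field F] [IsAlgClosed F] [CharZero F]
    {J : Type*} [Group J] (P : Subgroup J) [P.Normal] (g : J)
    (hgen : Subgroup.closure ((P : Set J) ∪ {g}) = ⊤)
    (hfree : ∀ m : ℤ, g ^ m ∈ P → m = 0)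
    {V : Type*} [AddCommGroup V] [Module F V] [FiniteDimensional F V]
    (ρ : Representation F J V)
    (hirr : IsIrreducibleRep ρ)
    (hPfin : (Set.range fun x : P => ρ (x : J)).Finite) :
    ∃ χ : J →* Fˣ, (∀ σ ∈ P, χ σ = 1) ∧
      (Set.range fun x : J => ((↑(χ x)⁻¹ : F) • ρ x : V →ₗ[F] V)).Finite :=
  exists_character_twist_finite_image_general P g hgen hfree ρ hirr hPfin
end

section
/- Let W be a finite-dimensional irreducible representation of J over F such that the image of P in GL(W) is finite. Then for every positive integer n, the representation W \otimes U(n) of J is indecomposable. -/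
/-!
Write `V_k ⊆ W ⊗ U(n)` for the copy of `W ⊗ U(k)`, i.e. the tensors whose coordinates of index
`≥ k` vanish; each `V_k` is stable under `P` and `g`. Let `X ≠ 0` be invariant and `k` minimal with
`X ∩ V_k ≠ 0`. The coordinate `k - 1` embeds `X ∩ V_k` into `W`, and its image is invariant, hence
all of `W`. If `k ≥ 2`, reading off coordinate `k - 2` through the inverse gives `A ∈ End W` with
`A σ(g) = σ(g) (A + 1)`; taking traces, `dim W = 0` in `F`, impossible in characteristic `0`. So
`k = 1` and `V_1 ⊆ X`. Two complementary nonzero invariant subspaces would both contain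
`V_1 ≠ 0`.
-/

open TensorProduct

theorem Module.End.natCast_finrank_eq_zero_of_mul_eq_mul_add_one {R M : Type*} [CommRing R]
    [AddCommGroup M] [Module R M] [Module.Free R M] [Module.Finite R M]
    (T : (Module.End R M)ˣ) {A : Module.End R M} (h : A * T = T * (A + 1)) :
    (Module.finrank R M : R) = 0 := by
  have hconj : ↑T * (A + 1) * ↑T⁻¹ = A := by rw [← h, mul_assoc, Units.mul_inv, mul_one]
  have htrace := congrArg (LinearMap.trace R M) hconj
  rwa [LinearMap.trace_conj, map_add, LinearMap.trace_one, add_eq_left] at htrace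

theorem IsInvariantSubspace.of_closure_eq_top {F G V : Type*} [Field F] [Group G]
    [AddCommGroup V] [Module F V] [FiniteDimensional F V] {ρ : Representation F G V} {S : Set G}
    (hS : Subgroup.closure S = ⊤) {p : Submodule F V} (h : ∀ s ∈ S, ∀ v ∈ p, ρ s v ∈ p) :
    IsInvariantSubspace ρ p := by
  intro x
  induction (hS ▸ Subgroup.mem_top x : x ∈ Subgroup.closure S) using
    Subgroup.closure_induction'' with
  | mem s hs => exact h s hs
  | inv_mem s hs =>
    intro v hv
    have hsurj : Function.Surjective ((ρ s).restrict (h s hs)) :=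
      LinearMap.injective_iff_surjective.mp fun a b hab => Subtype.ext <| by
        simpa using congrArg (fun u : p => ρ s⁻¹ u) hab
    obtain ⟨u, hu⟩ := hsurj ⟨v, hv⟩
    have hv' : v = ρ s u := congrArg Subtype.val hu.symm
    rw [hv', Representation.inv_self_apply]
    exact u.2
  | one => simp
  | mul x y _ _ hx hy =>
    intro v hv
    rw [map_mul, Module.End.mul_apply]
    exact hx _ (hy v hv)

section TensorCoordinates

variable (F : Type*) [Field F]

/-- Coordinates are indexed by `ℕ` and vanish from `n` on, so that the Jordan block acts
uniformly by `(J v)ᵢ = vᵢ + vᵢ₊₁`. -/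
def vecCoord (n i : ℕ) : (Fin n → F) →ₗ[F] F :=
  if h : i < n then LinearMap.proj ⟨i, h⟩ else 0

variable {F}

lemma vecCoord_of_lt {n i : ℕ} (h : i < n) (v : Fin n → F) : vecCoord F n i v = v ⟨i, h⟩ := by
  simp [vecCoord, h]

lemma vecCoord_of_le {n i : ℕ} (h : n ≤ i) : vecCoord F n i = 0 := by
  simp [vecCoord, Nat.not_lt.mpr h]

lemma sum_ite_val_eq_vecCoord (n i : ℕ) (v : Fin n → F) :
    ∑ j : Fin n, (if (j : ℕ) = i then v j else 0) = vecCoord F n i v := by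
  rcases lt_or_ge i n with hi | hi
  · simp [vecCoord_of_lt hi, ← Fin.ext_iff (b := ⟨i, hi⟩)]
  · rw [vecCoord_of_le hi, LinearMap.zero_apply]
    exact Finset.sum_eq_zero fun j _ => if_neg (by omega)

lemma vecCoord_toLin'_jordanMatrix (n i : ℕ) (v : Fin n → F) :
    vecCoord F n i (Matrix.toLin' (jordanMatrix F n) v) =
      vecCoord F n i v + vecCoord F n (i + 1) v := by
  rcases lt_or_ge i n with hi | hi
  · rw [vecCoord_of_lt hi, Matrix.toLin'_apply, Matrix.mulVec, dotProduct,
      ← sum_ite_val_eq_vecCoord, ← sum_ite_val_eq_vecCoord, ← Finset.sum_add_distrib]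
    refine Finset.sum_congr rfl fun j _ => ?_
    simp only [jordanMatrix, Matrix.of_apply]
    split_ifs <;> first | omega | simp
  · simp [vecCoord_of_le hi, vecCoord_of_le (hi.trans i.le_succ)]

variable (F) (W : Type*) [AddCommGroup W] [Module F W]

def tensorCoord (n i : ℕ) : W ⊗[F] (Fin n → F) →ₗ[F] W :=
  TensorProduct.rid F W ∘ₗ (vecCoord F n i).lTensor W

/-- The copy of `W ⊗ U(k)` inside `W ⊗ U(n)`. -/
def tensorFlag (n k : ℕ) : Submodule F (W ⊗[F] (Fin n → F)) :=
  ⨅ (i : ℕ) (_ : k ≤ i), LinearMap.ker (tensorCoord F W n i)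

variable {F W} {n : ℕ}

@[simp]
lemma tensorCoord_tmul (i : ℕ) (w : W) (v : Fin n → F) :
    tensorCoord F W n i (w ⊗ₜ v) = vecCoord F n i v • w := by
  simp [tensorCoord]

lemma tensorCoord_of_le {i : ℕ} (h : n ≤ i) (t : W ⊗[F] (Fin n → F)) :
    tensorCoord F W n i t = 0 := by
  simp [tensorCoord, vecCoord_of_le h]

lemma tensorCoord_map_one (f : Module.End F W) (i : ℕ) (t : W ⊗[F] (Fin n → F)) :
    tensorCoord F W n i (TensorProduct.map f 1 t) = f (tensorCoord F W n i t) := by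
  induction t using TensorProduct.induction_on with
  | zero => simp
  | tmul w v => simp
  | add s t hs ht => simp only [map_add, hs, ht]

lemma tensorCoord_map_jordan (f : Module.End F W) (i : ℕ) (t : W ⊗[F] (Fin n → F)) :
    tensorCoord F W n i (TensorProduct.map f (Matrix.toLin' (jordanMatrix F n)) t) =
      f (tensorCoord F W n i t + tensorCoord F W n (i + 1) t) := by
  induction t using TensorProduct.induction_on with
  | zero => simp
  | tmul w v =>
    simp only [map_tmul, tensorCoord_tmul, vecCoord_toLin'_jordanMatrix, add_smul, map_smul,
      map_add]
  | add s t hs ht => simp only [map_add, hs, ht]; abel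

lemma piScalarRight_apply_eq_tensorCoord (t : W ⊗[F] (Fin n → F)) (j : Fin n) :
    TensorProduct.piScalarRight F F W (Fin n) t j = tensorCoord F W n j t := by
  induction t using TensorProduct.induction_on with
  | zero => simp
  | tmul w v => simp [vecCoord_of_lt j.isLt]
  | add s t hs ht => simp only [map_add, Pi.add_apply, hs, ht]

lemma eq_zero_of_forall_tensorCoord_eq_zero {t : W ⊗[F] (Fin n → F)}
    (h : ∀ i, tensorCoord F W n i t = 0) : t = 0 :=
  (TensorProduct.piScalarRight F F W (Fin n)).map_eq_zero_iff.mp <| funext fun j => by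
    rw [piScalarRight_apply_eq_tensorCoord, h, Pi.zero_apply]

lemma mem_tensorFlag {k : ℕ} {t : W ⊗[F] (Fin n → F)} :
    t ∈ tensorFlag F W n k ↔ ∀ i, k ≤ i → tensorCoord F W n i t = 0 := by
  simp [tensorFlag]

lemma tensorFlag_zero : tensorFlag F W n 0 = ⊥ :=
  eq_bot_iff.mpr fun _ ht =>
    eq_zero_of_forall_tensorCoord_eq_zero fun i => mem_tensorFlag.mp ht i i.zero_le

lemma tensorFlag_of_le {k : ℕ} (h : n ≤ k) : tensorFlag F W n k = ⊤ :=
  eq_top_iff.mpr fun t _ => mem_tensorFlag.mpr fun _ hi => tensorCoord_of_le (h.trans hi) t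

lemma mem_tensorFlag_of_mem_succ {k : ℕ} {t : W ⊗[F] (Fin n → F)}
    (ht : t ∈ tensorFlag F W n (k + 1)) (hk : tensorCoord F W n k t = 0) :
    t ∈ tensorFlag F W n k := by
  refine mem_tensorFlag.mpr fun i hi => ?_
  rcases hi.eq_or_lt with rfl | hi
  · exact hk
  · exact mem_tensorFlag.mp ht i hi

lemma map_one_mem_tensorFlag (f : Module.End F W) {k : ℕ} {t : W ⊗[F] (Fin n → F)}
    (ht : t ∈ tensorFlag F W n k) : TensorProduct.map f 1 t ∈ tensorFlag F W n k :=
  mem_tensorFlag.mpr fun i hi => by rw [tensorCoord_map_one, mem_tensorFlag.mp ht i hi, map_zero]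

lemma map_jordan_mem_tensorFlag (f : Module.End F W) {k : ℕ} {t : W ⊗[F] (Fin n → F)}
    (ht : t ∈ tensorFlag F W n k) :
    TensorProduct.map f (Matrix.toLin' (jordanMatrix F n)) t ∈ tensorFlag F W n k :=
  mem_tensorFlag.mpr fun i hi => by
    rw [tensorCoord_map_jordan, mem_tensorFlag.mp ht i hi,
      mem_tensorFlag.mp ht (i + 1) (by omega), add_zero, map_zero]

lemma tensorFlag_one_ne_bot [Nontrivial W] (hn : 0 < n) : tensorFlag F W n 1 ≠ ⊥ := by
  obtain ⟨w, hw⟩ := exists_ne (0 : W)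
  refine (Submodule.ne_bot_iff _).mpr ⟨w ⊗ₜ Pi.single ⟨0, hn⟩ 1, ?_, fun h => hw ?_⟩
  · refine mem_tensorFlag.mpr fun i hi => ?_
    rcases lt_or_ge i n with hin | hin
    · simp [vecCoord_of_lt hin, Fin.ext_iff, Nat.one_le_iff_ne_zero.mp hi]
    · exact tensorCoord_of_le hin _
  · simpa [vecCoord_of_lt hn] using congrArg (tensorCoord F W n 0) h

lemma tensorFlag_one_le_of_map_tensorCoord_eq_top {X : Submodule F (W ⊗[F] (Fin n → F))}
    (hX : (X ⊓ tensorFlag F W n 1).map (tensorCoord F W n 0) = ⊤) : tensorFlag F W n 1 ≤ X := by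
  intro t ht
  obtain ⟨y, hy, hyt⟩ :=
    Submodule.mem_map.mp (hX ▸ Submodule.mem_top : tensorCoord F W n 0 t ∈ _)
  have hdiff : y - t ∈ tensorFlag F W n 0 :=
    mem_tensorFlag_of_mem_succ (sub_mem hy.2 ht) (by rw [map_sub, hyt, sub_self])
  rw [tensorFlag_zero, Submodule.mem_bot, sub_eq_zero] at hdiff
  exact hdiff ▸ hy.1

end TensorCoordinates

section Invariance

variable {F W : Type*} [Field F] [AddCommGroup W] [Module F W] {n : ℕ}
  {J : Type*} [Group J] {P : Subgroup J} {g : J} {σ : Representation F J W}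
  {U : Representation F J (Fin n → F)}

lemma isInvariantSubspace_map_tensorCoord [FiniteDimensional F W]
    (hgen : Subgroup.closure ((P : Set J) ∪ {g}) = ⊤) (hUP : ∀ x ∈ P, U x = 1)
    (hUg : U g = Matrix.toLin' (jordanMatrix F n)) {X : Submodule F (W ⊗[F] (Fin n → F))}
    (hX : IsInvariantSubspace (σ.tprod U) X) (k : ℕ) :
    IsInvariantSubspace σ ((X ⊓ tensorFlag F W n (k + 1)).map (tensorCoord F W n k)) := by
  refine IsInvariantSubspace.of_closure_eq_top hgen ?_
  rintro s hs _ ⟨y, ⟨hyX, hyV⟩, rfl⟩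
  refine ⟨σ.tprod U s y, ⟨hX s y hyX, ?_⟩, ?_⟩
  · rcases hs with hs | rfl
    · rw [Representation.tprod_apply, hUP s hs]
      exact map_one_mem_tensorFlag _ hyV
    · rw [Representation.tprod_apply, hUg]
      exact map_jordan_mem_tensorFlag _ hyV
  · rcases hs with hs | rfl
    · rw [Representation.tprod_apply, hUP s hs, tensorCoord_map_one]
    · rw [Representation.tprod_apply, hUg, tensorCoord_map_jordan,
        mem_tensorFlag.mp hyV (k + 1) le_rfl, add_zero]

lemma map_tensorCoord_ne_top [FiniteDimensional F W] [Nontrivial W] [CharZero F]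
    (hUg : U g = Matrix.toLin' (jordanMatrix F n)) {X : Submodule F (W ⊗[F] (Fin n → F))}
    (hX : ∀ t ∈ X, σ.tprod U g t ∈ X) {k : ℕ} (hbot : X ⊓ tensorFlag F W n (k + 1) = ⊥) :
    (X ⊓ tensorFlag F W n (k + 2)).map (tensorCoord F W n (k + 1)) ≠ ⊤ := by
  intro htop
  set Y := X ⊓ tensorFlag F W n (k + 2)
  have hinj : Function.Injective (tensorCoord F W n (k + 1) ∘ₗ Y.subtype) := by
    refine LinearMap.ker_eq_bot.mp (eq_bot_iff.mpr fun y hy => ?_)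
    have hy0 : (y : W ⊗[F] (Fin n → F)) ∈ X ⊓ tensorFlag F W n (k + 1) :=
      ⟨y.2.1, mem_tensorFlag_of_mem_succ y.2.2 hy⟩
    rw [hbot, Submodule.mem_bot] at hy0
    exact (Submodule.mem_bot F).mpr (Subtype.ext hy0)
  have hsurj : Function.Surjective (tensorCoord F W n (k + 1) ∘ₗ Y.subtype) := by
    rw [← LinearMap.range_eq_top, LinearMap.range_comp, Submodule.range_subtype, htop]
  let e := LinearEquiv.ofBijective _ ⟨hinj, hsurj⟩
  let A : Module.End F W := tensorCoord F W n k ∘ₗ Y.subtype ∘ₗ e.symm.toLinearMap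
  have hTY : ∀ y ∈ Y, σ.tprod U g y ∈ Y := fun y hy =>
    ⟨hX y hy.1, by rw [Representation.tprod_apply, hUg]; exact map_jordan_mem_tensorFlag _ hy.2⟩
  have hA : ∀ w, A (σ g w) = σ g (A w + w) := by
    intro w
    have hy : tensorCoord F W n (k + 1) (e.symm w) = w := e.apply_symm_apply w
    have hgy : e.symm (σ g w) = ⟨_, hTY _ (e.symm w).2⟩ := by
      refine e.symm_apply_eq.mpr (Eq.symm ?_)
      change tensorCoord F W n (k + 1) (σ.tprod U g (e.symm w)) = σ g w
      rw [Representation.tprod_apply, hUg, tensorCoord_map_jordan, hy,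
        mem_tensorFlag.mp (e.symm w).2.2 (k + 2) le_rfl, add_zero]
    change tensorCoord F W n k (e.symm (σ g w) : W ⊗[F] (Fin n → F)) = _
    rw [hgy]
    change tensorCoord F W n k (σ.tprod U g (e.symm w)) =
      σ g (tensorCoord F W n k (e.symm w) + w)
    rw [Representation.tprod_apply, hUg, tensorCoord_map_jordan, hy]
  have := Module.End.natCast_finrank_eq_zero_of_mul_eq_mul_add_one (σ.asGroupHom g) (A := A)
    (LinearMap.ext fun w => by simp [hA, Representation.asGroupHom_apply])
  exact Module.finrank_pos.ne' (Nat.cast_eq_zero.mp this)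

lemma tensorFlag_one_le_of_ne_bot [FiniteDimensional F W] [CharZero F]
    (hgen : Subgroup.closure ((P : Set J) ∪ {g}) = ⊤) (hirr : IsIrreducibleRep σ)
    (hUP : ∀ x ∈ P, U x = 1) (hUg : U g = Matrix.toLin' (jordanMatrix F n))
    {X : Submodule F (W ⊗[F] (Fin n → F))} (hX : IsInvariantSubspace (σ.tprod U) X)
    (hX0 : X ≠ ⊥) : tensorFlag F W n 1 ≤ X := by
  have := hirr.1
  suffices ∀ k, X ⊓ tensorFlag F W n k ≠ ⊥ → tensorFlag F W n 1 ≤ X from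
    this n (by rwa [tensorFlag_of_le le_rfl, inf_top_eq])
  intro k
  induction k with
  | zero => simp [tensorFlag_zero]
  | succ k ih =>
    intro hk
    by_cases hprev : X ⊓ tensorFlag F W n k = ⊥
    · rcases hirr.2 _ (isInvariantSubspace_map_tensorCoord hgen hUP hUg hX k) with hbot | htop
      · refine absurd (eq_bot_iff.mpr fun y hy => ?_) hk
        rw [← hprev]
        exact ⟨hy.1, mem_tensorFlag_of_mem_succ hy.2 (LinearMap.le_ker_iff_map.mpr hbot hy)⟩
      · cases k with
        | zero => exact tensorFlag_one_le_of_map_tensorCoord_eq_top htop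
        | succ m => exact absurd htop (map_tensorCoord_ne_top hUg (hX g) hprev)
    · exact ih hprev

end Invariance

theorem isIndecomposable_tprod_jordan_general
    {F : Type*} [Field F] [CharZero F]
    {J : Type*} [Group J] (P : Subgroup J) (g : J)
    (hgen : Subgroup.closure ((P : Set J) ∪ {g}) = ⊤)
    {W : Type*} [AddCommGroup W] [Module F W] [FiniteDimensional F W]
    (σ : Representation F J W)
    (hirr : IsIrreducibleRep σ)
    (n : ℕ) (hn : 0 < n)
    (U : Representation F J (Fin n → F)) (hU : IsUnipotentJordanRep P g n U) :
    IsIndecomposableRep (σ.tprod U) := by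
  have := hirr.1
  have hflag : tensorFlag F W n 1 ≠ ⊥ := tensorFlag_one_ne_bot hn
  have hle : ∀ X, IsInvariantSubspace (σ.tprod U) X → X ≠ ⊥ → tensorFlag F W n 1 ≤ X :=
    fun _ hX hX0 => tensorFlag_one_le_of_ne_bot hgen hirr hU.1 hU.2 hX hX0
  refine ⟨?_, fun p q hp hq hpq => ?_⟩
  · obtain ⟨t, -, ht⟩ := (Submodule.ne_bot_iff _).mp hflag
    exact nontrivial_of_ne t 0 ht
  · by_contra! h
    exact hflag (eq_bot_iff.mpr (hpq.inf_eq_bot ▸ le_inf (hle p hp h.1) (hle q hq h.2)))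

/-- Lemma 2.2(iii): let `F` be an algebraically closed field of characteristic `0`, `J` a
group, `P` a normal subgroup, and `g ∈ J` such that `J` is generated by `P` and `g` and
`J/P` is infinite cyclic generated by the image of `g`. If `W` is a finite-dimensional
irreducible representation of `J` over `F` on which `P` has finite image, then for every
positive integer `n` and every representation `U` of type `U(n)`, the representation
`W ⊗ U(n)` is indecomposable. -/
theorem isIndecomposable_tprod_jordan
    {F : Type*} [Field F] [IsAlgClosed F] [CharZero F]
    {J : Type*} [Group J] (P : Subgroup J) [P.Normal] (g : J)
    (hgen : Subgroup.closure ((P : Set J) ∪ {g}) = ⊤)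
    (hfree : ∀ m : ℤ, g ^ m ∈ P → m = 0)
    {W : Type*} [AddCommGroup W] [Module F W] [FiniteDimensional F W]
    (σ : Representation F J W)
    (hirr : IsIrreducibleRep σ)
    (hPfin : (Set.range fun x : P => σ (x : J)).Finite)
    (n : ℕ) (hn : 0 < n)
    (U : Representation F J (Fin n → F)) (hU : IsUnipotentJordanRep P g n U) :
    IsIndecomposableRep (σ.tprod U) :=
  isIndecomposable_tprod_jordan_general P g hgen σ hirr n hn U hU
end
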